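/- arXiv:1011.1564 — 4 statements merged into one kernel-verified Lean document; each statement's English description precedes it below -/
import Mathlib

section
/- For multisets (or multi-indices) m1, m2, n1, n2 of variables, define the 2x2 catalecticant bracket [m1,m2|n1,n2] to be the determinant of the 2x2 matrix whose (i,j) entry is the variable z indexed by the multiset union of m_i and n_j. Then for any multisets u1, u2, v1, v2, a1, a2, b1, b2, the identity [u1∪u2, v1∪v2 | a1∪a2, b1∪b2] = [u1∪a1, v1∪b1 | u2∪a2, v2∪b2] + [u1∪b2, v1∪a2 | v2∪a1, u2∪b1] holds in the polynomial ring whose variables z_γ are indexed by multisets γ. -/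
open MvPolynomial

/-- The 2×2 catalecticant bracket: `[m1,m2|n1,n2] = z_{m1∪n1}·z_{m2∪n2} − z_{m1∪n2}·z_{m2∪n1}`,
in the polynomial ring whose variables are indexed by multisets (multiset union = addition). -/
noncomputable def catBracket {K : Type*} [CommRing K] {τ : Type*}
    (m1 m2 n1 n2 : Multiset τ) : MvPolynomial (Multiset τ) K :=
  X (m1 + n1) * X (m2 + n2) - X (m1 + n2) * X (m2 + n1)

theorem stmt0 {K : Type*} [CommRing K] {τ : Type*}
    (u1 u2 v1 v2 a1 a2 b1 b2 : Multiset τ) :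
    (catBracket (K := K) (u1 + u2) (v1 + v2) (a1 + a2) (b1 + b2)) =
      catBracket (u1 + a1) (v1 + b1) (u2 + a2) (v2 + b2) +
      catBracket (u1 + b2) (v1 + a2) (v2 + a1) (u2 + b1) := by
  unfold catBracket
  -- Once the indices are normalized, the two mixed products on the right,
  -- `z_{u1+a1+v2+b2} z_{v1+b1+u2+a2}` and `z_{u1+b2+v2+a1} z_{v1+a2+u2+b1}`, coincide and cancel;
  -- the remaining two products are those of the left-hand side.
  abel_nf
end

section
/- Over a field K, let H(d) denote the (d+1)-variable generic Hankel matrix setup: for 1 ≤ t ≤ d−1, Cat(t, d−t; 2) is the (t+1) × (d−t+1) matrix with (i,j) entry z_{i+j} for 0 ≤ i ≤ t, 0 ≤ j ≤ d−t, in the polynomial ring K[z_0, …, z_d]. Prove that the ideal generated by the 2×2 minors of Cat(1, d−1; 2) equals the ideal generated by the 2×2 minors of Cat(t, d−t; 2) for every 1 ≤ t ≤ d−1. -/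
open MvPolynomial
open Fin.NatCast

/-- The ideal generated by the 2×2 minors of the Hankel/catalecticant matrix `Cat(t, d−t; 2)`,
the `(t+1) × (d−t+1)` matrix with `(i,j)` entry `z_{i+j}`, inside `K[z_0, …, z_d]`. -/
noncomputable def hankelMinors2 (K : Type*) [Field K] (d t : ℕ) :
    Ideal (MvPolynomial (Fin (d + 1)) K) :=
  Ideal.span {p | ∃ i i' j j' : ℕ, i < i' ∧ i' ≤ t ∧ j < j' ∧ j' ≤ d - t ∧
    p = X ((i + j : ℕ) : Fin (d + 1)) * X ((i' + j' : ℕ) : Fin (d + 1)) -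
        X ((i + j' : ℕ) : Fin (d + 1)) * X ((i' + j : ℕ) : Fin (d + 1))}

/-!
Modulo the 2×2 minors of `Cat(t, d−t; 2)`, with `1 ≤ t ≤ d − 1`, every binomial
`z_a z_b − z_c z_e` with `a + b = c + e` vanishes, so the ideal is the same for all such `t`.
The binomial `z_a z_{a+p+q} − z_{a+p} z_{a+q}` is a minor as soon as the offsets `p, q` fit
the `t × (d−t)` box. The unit step `z_a z_{b+1} − z_{a+1} z_b` is then either a minor itself
(when `b − a ≤ max t (d−t)`) or the difference of two minors through `z_{a+k} z_{b+1−k}`,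
and every binomial telescopes into unit steps.
-/

section

variable {K : Type*} [Field K] {d t : ℕ}

theorem X_mul_X_add_add_sub_mem_hankelMinors2 (a p q : ℕ) (hp : 1 ≤ p) (hq : 1 ≤ q)
    (hsum : a + p + q ≤ d) (hbox : p ≤ d - t ∧ q ≤ t ∨ p ≤ t ∧ q ≤ d - t) :
    X (a : Fin (d + 1)) * X ((a + p + q : ℕ) : Fin (d + 1)) -
        X ((a + p : ℕ) : Fin (d + 1)) * X ((a + q : ℕ) : Fin (d + 1)) ∈
      hankelMinors2 K d t := by
  wlog hpq : p ≤ d - t ∧ q ≤ t generalizing p q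
  · have := this q p hq hp (by omega) (by tauto) (by tauto)
    rwa [add_right_comm a q p, mul_comm (X ((a + q : ℕ) : Fin (d + 1)))] at this
  refine Ideal.subset_span ⟨min a (t - q), min a (t - q) + q, a - min a (t - q),
    a - min a (t - q) + p, by omega, by omega, by omega, by omega, ?_⟩
  rw [show min a (t - q) + (a - min a (t - q)) = a by omega,
    show min a (t - q) + q + (a - min a (t - q) + p) = a + p + q by omega,
    show min a (t - q) + (a - min a (t - q) + p) = a + p by omega,
    show min a (t - q) + q + (a - min a (t - q)) = a + q by omega]

theorem X_mul_X_succ_sub_mem_hankelMinors2 (ht1 : 1 ≤ t) (ht2 : t ≤ d - 1) {a b : ℕ}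
    (hab : a < b) (hb : b + 1 ≤ d) :
    X (a : Fin (d + 1)) * X ((b + 1 : ℕ) : Fin (d + 1)) -
        X ((a + 1 : ℕ) : Fin (d + 1)) * X (b : Fin (d + 1)) ∈ hankelMinors2 K d t := by
  obtain ⟨M, hM⟩ : ∃ M, M = max t (d - t) := ⟨_, rfl⟩
  by_cases hshort : b - a ≤ M
  · have h := X_mul_X_add_add_sub_mem_hankelMinors2 (K := K) (d := d) (t := t) a 1 (b - a)
      le_rfl (by omega) (by omega) (by omega)
    rwa [show a + 1 + (b - a) = b + 1 by omega, show a + (b - a) = b by omega] at h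
  · -- two minors through `z_{a+k} z_{a+M}`; they fit as `k ≤ min t (d - t)` by `b + 1 ≤ d`
    obtain ⟨k, hk⟩ : ∃ k, k = b + 1 - a - M := ⟨_, rfl⟩
    have outer := X_mul_X_add_add_sub_mem_hankelMinors2 (K := K) (d := d) (t := t) a k M
      (by omega) (by omega) (by omega) (by omega)
    have inner := X_mul_X_add_add_sub_mem_hankelMinors2 (K := K) (d := d) (t := t)
      (a + 1) (k - 1) (M - 1) (by omega) (by omega) (by omega) (by omega)
    rw [show a + k + M = b + 1 by omega] at outer
    rw [show a + 1 + (k - 1) + (M - 1) = b by omega, show a + 1 + (k - 1) = a + k by omega,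
      show a + 1 + (M - 1) = a + M by omega] at inner
    convert Ideal.sub_mem _ outer inner using 1
    ring

theorem X_mul_X_add_sub_mem_hankelMinors2 (ht1 : 1 ≤ t) (ht2 : t ≤ d - 1) (n : ℕ) {a e : ℕ}
    (hae : a + n ≤ e) (he : e + n ≤ d) :
    X (a : Fin (d + 1)) * X ((e + n : ℕ) : Fin (d + 1)) -
        X ((a + n : ℕ) : Fin (d + 1)) * X (e : Fin (d + 1)) ∈ hankelMinors2 K d t := by
  induction n generalizing a with
  | zero => simp
  | succ n ih =>
    have step := X_mul_X_succ_sub_mem_hankelMinors2 (K := K) ht1 ht2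
      (show a < e + n by omega) (by omega)
    have rest := ih (a := a + 1) (by omega) (by omega)
    rw [← add_assoc, show a + (n + 1) = a + 1 + n by omega]
    convert Ideal.add_mem _ step rest using 1
    ring

theorem X_mul_X_sub_X_mul_X_mem_hankelMinors2_of_add_eq (ht1 : 1 ≤ t) (ht2 : t ≤ d - 1)
    {a b c e : ℕ} (h : a + b = c + e) (ha : a ≤ d) (hb : b ≤ d) (hc : c ≤ d)
    (he : e ≤ d) :
    X (a : Fin (d + 1)) * X (b : Fin (d + 1)) - X (c : Fin (d + 1)) * X (e : Fin (d + 1)) ∈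
      hankelMinors2 K d t := by
  wlog hab : a ≤ b generalizing a b
  · simpa only [mul_comm (X (b : Fin (d + 1)))] using this (by omega) hb ha (by omega)
  wlog hce : c ≤ e generalizing c e
  · simpa only [mul_comm (X (e : Fin (d + 1)))] using this he hc (by omega) (by omega)
  wlog hac : a ≤ c generalizing a b c e
  · simpa only [neg_sub] using neg_mem (this hc he hce ha hb h.symm hab (by omega))
  obtain ⟨n, rfl⟩ := Nat.exists_eq_add_of_le hac
  obtain rfl : b = e + n := by omega
  exact X_mul_X_add_sub_mem_hankelMinors2 ht1 ht2 n (by omega) hb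

theorem hankelMinors2_le (htd : t ≤ d) {s : ℕ} (hs1 : 1 ≤ s) (hs2 : s ≤ d - 1) :
    hankelMinors2 K d t ≤ hankelMinors2 K d s := by
  refine Ideal.span_le.mpr ?_
  rintro _ ⟨i, i', j, j', hi, hi', hj, hj', rfl⟩
  exact X_mul_X_sub_X_mul_X_mem_hankelMinors2_of_add_eq hs1 hs2 (by omega)
    (by omega) (by omega) (by omega) (by omega)

end

theorem stmt7_general {K : Type*} [Field K] (d : ℕ)
    (t : ℕ) (ht1 : 1 ≤ t) (ht2 : t ≤ d - 1) :
    hankelMinors2 K d 1 = hankelMinors2 K d t :=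
  le_antisymm (hankelMinors2_le (by omega) ht1 ht2)
    (hankelMinors2_le (by omega) le_rfl (ht1.trans ht2))

theorem stmt7 {K : Type*} [Field K] (d : ℕ) (hd : 2 ≤ d)
    (t : ℕ) (ht1 : 1 ≤ t) (ht2 : t ≤ d - 1) :
    hankelMinors2 K d 1 = hankelMinors2 K d t :=
  stmt7_general d t ht1 ht2
end

section
/- Let a, b ≥ 1 with a + b = d, and fix n ≥ 2. Every 2×2 minor of the generic catalecticant Cat(a, b; n) vanishes at every K-point of the affine cone over the d-th Veronese embedding of P^{n−1}; conversely, any point (z_γ)_{|γ|=d} ∈ K^{binom(n+d−1,d)}, K algebraically closed, at which all 2×2 minors of Cat(1, d−1; n) vanish and which is nonzero lies on the affine cone over the Veronese variety. -/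
/-!
If the catalecticant `Cat(1, d - 1)` of `z` has rank at most one and `c = z(d e_k) ≠ 0`, then each
minor relating the columns `β` and `(d - 1) e_k` trades one factor `x_i` of a monomial for `x_k`:
`c · z(β + e_i) = w_i · z(β + e_k)` with `w_i = z((d - 1) e_k + e_i)`. Moving all of `γ` onto
`x_k` this way gives `c^(d-1) z(γ) = w^γ`, and dividing `w` by a `d`-th root of `c^(d-1)` yields
`z(γ) = f^γ`. A nonzero `c` exists because the minor `z(γ)² = z(γ - e_k + e_i) z(γ - e_i + e_k)`
keeps some value nonzero while mass is moved onto a variable `x_k` with `γ_k > 0`.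
-/

open Finset

section

variable {ι K : Type*} [DecidableEq ι]

theorem exists_eq_add_single {β : ι → ℕ} {k : ι} (h : β k ≠ 0) :
    ∃ α : ι → ℕ, β = α + Pi.single k 1 :=
  ⟨β - Pi.single k 1, by funext j; by_cases hj : j = k <;> simp [hj]; omega⟩

variable [Fintype ι]

theorem prod_pow_single [CommMonoid K] (w : ι → K) (k : ι) (m : ℕ) :
    ∏ j, w j ^ Pi.single k m j = w k ^ m :=
  (prod_eq_single k (fun j _ hj => by simp [hj]) (by simp)).trans (by simp)

theorem prod_pow_add_single [CommMonoid K] (w : ι → K) (β : ι → ℕ) (i : ι) :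
    ∏ j, w j ^ (β + Pi.single i 1 : ι → ℕ) j = (∏ j, w j ^ β j) * w i := by
  simp only [Pi.add_apply, pow_add, prod_mul_distrib, prod_pow_single, pow_one]

theorem sum_add_single (β : ι → ℕ) (i : ι) :
    ∑ j, (β + Pi.single i 1 : ι → ℕ) j = ∑ j, β j + 1 := by
  simp [sum_add_distrib]

theorem degree_induction_from_single {P : (ι → ℕ) → Prop} (k : ι) (e : ℕ)
    (base : P (Pi.single k (e + 1)))
    (step : ∀ β : ι → ℕ, ∑ j, β j = e → ∀ i ≠ k, P (β + Pi.single k 1) → P (β + Pi.single i 1))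
    (γ : ι → ℕ) (hγ : ∑ j, γ j = e + 1) : P γ := by
  by_cases hsingle : ∀ i ≠ k, γ i = 0
  · have hγk : γ = Pi.single k (γ k) := by
      funext j; by_cases hj : j = k <;> simp [hj, hsingle]
    rw [hγk] at hγ ⊢
    simp only [Fintype.sum_pi_single'] at hγ
    rwa [hγ]
  · push Not at hsingle
    obtain ⟨i, hik, hi⟩ := hsingle
    obtain ⟨β, rfl⟩ := exists_eq_add_single hi
    have hβ : ∑ j, β j = e := by rw [sum_add_single] at hγ; omega
    have hβk : β k ≤ e := hβ ▸ single_le_sum (fun _ _ => Nat.zero_le _) (mem_univ k)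
    exact step β hβ i hik
      (degree_induction_from_single k e base step (β + Pi.single k 1)
        (by rw [sum_add_single, hβ]))
termination_by e + 1 - γ k
decreasing_by subst_vars; simp [hik.symm]; omega

variable [Field K]

/-- The `2 × 2` minors of `Cat(1, e)` vanish at `z`: its rows are indexed by the variables `i`,
its columns by the monomials `β` of degree `e`, and its `(i, β)` entry is `z (β + e_i)`. -/
def CatalecticantRankLeOne (z : (ι → ℕ) → K) (e : ℕ) : Prop :=
  ∀ (i i' : ι) (β β' : ι → ℕ), ∑ j, β j = e → ∑ j, β' j = e →
    z (β + Pi.single i 1) * z (β' + Pi.single i' 1) =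
      z (β' + Pi.single i 1) * z (β + Pi.single i' 1)

namespace CatalecticantRankLeOne

variable {z : (ι → ℕ) → K} {e : ℕ}

theorem sq_eq (hz : CatalecticantRankLeOne z e) {α : ι → ℕ} (hα : ∑ j, α j + 1 = e) (i k : ι) :
    z (α + Pi.single k 1 + Pi.single i 1) ^ 2 =
      z (α + Pi.single i 1 + Pi.single i 1) * z (α + Pi.single k 1 + Pi.single k 1) := by
  have := hz i k (α + Pi.single k 1) (α + Pi.single i 1) (by rwa [sum_add_single])
    (by rwa [sum_add_single])
  rwa [add_right_comm α (Pi.single i 1), ← sq] at this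

theorem exists_single_ne_zero (hz : CatalecticantRankLeOne z e) {γ : ι → ℕ}
    (hγ : ∑ j, γ j = e + 1) (hzγ : z γ ≠ 0) : ∃ k, z (Pi.single k (e + 1)) ≠ 0 := by
  obtain ⟨k, hk⟩ : ∃ k, γ k ≠ 0 := by
    by_contra! h
    simp [h] at hγ
  refine ⟨k, degree_induction_from_single
    (P := fun γ => γ k ≠ 0 → z γ ≠ 0 → z (Pi.single k (e + 1)) ≠ 0) k e (fun _ h => h) ?_
    γ hγ hk hzγ⟩
  intro β hβ i hik ih hβk hzβ
  obtain ⟨α, rfl⟩ := exists_eq_add_single (k := k) (β := β) (by simpa [hik.symm] using hβk)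
  refine ih (by simp) fun h => hzβ (pow_eq_zero_iff two_ne_zero |>.mp ?_)
  rw [hz.sq_eq (by rwa [sum_add_single] at hβ) i k, h, mul_zero]

theorem pow_mul_eq_prod (hz : CatalecticantRankLeOne z e) {k : ι}
    (hk : z (Pi.single k (e + 1)) ≠ 0) {γ : ι → ℕ} (hγ : ∑ j, γ j = e + 1) :
    z (Pi.single k (e + 1)) ^ e * z γ = ∏ j, z (Pi.single k e + Pi.single j 1) ^ γ j := by
  set c := z (Pi.single k (e + 1))
  have hw : z (Pi.single k e + Pi.single k 1) = c := by rw [← Pi.single_add]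
  refine degree_induction_from_single
    (P := fun γ => c ^ e * z γ = ∏ j, z (Pi.single k e + Pi.single j 1) ^ γ j) k e ?_ ?_ γ hγ
  · rw [prod_pow_single, hw, pow_succ]
  · intro β hβ i _ ih
    have hex := hz i k β (Pi.single k e) hβ (by simp)
    rw [hw] at hex
    apply mul_right_cancel₀ hk
    calc c ^ e * z (β + Pi.single i 1) * c
        = z (Pi.single k e + Pi.single i 1) * (c ^ e * z (β + Pi.single k 1)) := by
          linear_combination c ^ e * hex
      _ = (∏ j, z (Pi.single k e + Pi.single j 1) ^ (β + Pi.single i 1 : ι → ℕ) j) * c := by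
          rw [ih, prod_pow_add_single, prod_pow_add_single, hw]; ring

theorem exists_eq_prod_pow [IsAlgClosed K] (hz : CatalecticantRankLeOne z e) {γ₀ : ι → ℕ}
    (hγ₀ : ∑ j, γ₀ j = e + 1) (hzγ₀ : z γ₀ ≠ 0) :
    ∃ f : ι → K, ∀ γ : ι → ℕ, ∑ j, γ j = e + 1 → z γ = ∏ j, f j ^ γ j := by
  obtain ⟨k, hk⟩ := hz.exists_single_ne_zero hγ₀ hzγ₀
  obtain ⟨s, hs⟩ := IsAlgClosed.exists_pow_nat_eq (z (Pi.single k (e + 1)) ^ e) e.succ_pos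
  have hs0 : s ≠ 0 := by
    rintro rfl
    exact pow_ne_zero e hk (hs ▸ zero_pow e.succ_ne_zero)
  refine ⟨fun j => z (Pi.single k e + Pi.single j 1) / s, fun γ hγ => ?_⟩
  simp only [div_pow, prod_div_distrib]
  rw [prod_pow_eq_pow_sum, hγ, hs, ← hz.pow_mul_eq_prod hk hγ,
    mul_div_cancel_left₀ _ (pow_ne_zero _ hk)]

end CatalecticantRankLeOne

end

theorem stmt9_general {K : Type*} [Field K] [IsAlgClosed K] (n d a b : ℕ)
    (ha : 1 ≤ a) (hab : a + b = d) :
    (∀ (c : K) (f : Fin n → K) (α α' β β' : Fin n → ℕ),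
        (∑ j, α j = a) → (∑ j, α' j = a) → (∑ j, β j = b) → (∑ j, β' j = b) →
        (c * ∏ j, f j ^ (α j + β j)) * (c * ∏ j, f j ^ (α' j + β' j)) -
          (c * ∏ j, f j ^ (α j + β' j)) * (c * ∏ j, f j ^ (α' j + β j)) = 0) ∧
    (∀ z : (Fin n → ℕ) → K,
        (∃ γ : Fin n → ℕ, (∑ j, γ j = d) ∧ z γ ≠ 0) →
        (∀ (i i' : Fin n) (β β' : Fin n → ℕ),
            (∑ j, β j = d - 1) → (∑ j, β' j = d - 1) →
            z (fun j => β j + if j = i then 1 else 0) *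
              z (fun j => β' j + if j = i' then 1 else 0) -
            z (fun j => β' j + if j = i then 1 else 0) *
              z (fun j => β j + if j = i' then 1 else 0) = 0) →
        ∃ f : Fin n → K, ∀ γ : Fin n → ℕ, (∑ j, γ j = d) → z γ = ∏ j, f j ^ γ j) := by
  refine ⟨fun c f α α' β β' _ _ _ _ => by simp only [pow_add, prod_mul_distrib]; ring, ?_⟩
  rintro z ⟨γ₀, hγ₀, hzγ₀⟩ hminor
  obtain ⟨e, rfl⟩ : ∃ e, d = e + 1 := ⟨d - 1, by omega⟩
  have hsingle (β : Fin n → ℕ) (i : Fin n) :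
      (fun j => β j + if j = i then 1 else 0) = β + Pi.single i 1 := by
    funext j; simp [Pi.single_apply]
  have hz : CatalecticantRankLeOne z e := fun i i' β β' hβ hβ' => by
    simpa [hsingle, sub_eq_zero] using hminor i i' β β' hβ hβ'
  exact hz.exists_eq_prod_pow hγ₀ hzγ₀

/-- Part 1: every 2×2 minor of `Cat(a, b; n)` vanishes at every point of the affine cone over
the `d`-th Veronese variety, i.e. at points `z_γ = c·f^γ`.
Part 2 (converse, `K` algebraically closed): a nonzero point `(z_γ)_{|γ|=d}` at which all
2×2 minors of `Cat(1, d−1; n)` vanish lies on the affine cone over the Veronese variety,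
i.e. `z_γ = f^γ` for some `f ∈ K^n`. -/
theorem stmt9 {K : Type*} [Field K] [IsAlgClosed K] (n d a b : ℕ)
    (hn : 2 ≤ n) (ha : 1 ≤ a) (hb : 1 ≤ b) (hab : a + b = d) :
    (∀ (c : K) (f : Fin n → K) (α α' β β' : Fin n → ℕ),
        (∑ j, α j = a) → (∑ j, α' j = a) → (∑ j, β j = b) → (∑ j, β' j = b) →
        (c * ∏ j, f j ^ (α j + β j)) * (c * ∏ j, f j ^ (α' j + β' j)) -
          (c * ∏ j, f j ^ (α j + β' j)) * (c * ∏ j, f j ^ (α' j + β j)) = 0) ∧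
    (∀ z : (Fin n → ℕ) → K,
        (∃ γ : Fin n → ℕ, (∑ j, γ j = d) ∧ z γ ≠ 0) →
        (∀ (i i' : Fin n) (β β' : Fin n → ℕ),
            (∑ j, β j = d - 1) → (∑ j, β' j = d - 1) →
            z (fun j => β j + if j = i then 1 else 0) *
              z (fun j => β' j + if j = i' then 1 else 0) -
            z (fun j => β' j + if j = i then 1 else 0) *
              z (fun j => β j + if j = i' then 1 else 0) = 0) →
        ∃ f : Fin n → K, ∀ γ : Fin n → ℕ, (∑ j, γ j = d) → z γ = ∏ j, f j ^ γ j) :=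
  stmt9_general n d a b ha hab
end

section
/- Every 2×2 minor of the generic Hankel matrix lies in the ideal generated by adjacent 2×2 minors: in K[z_0, …, z_d], for all 0 ≤ i < i' and 0 ≤ j < j' with i' + j' ≤ d, the polynomial z_{i+j}·z_{i'+j'} − z_{i+j'}·z_{i'+j} lies in the ideal generated by the polynomials z_s·z_{t+1} − z_{s+1}·z_t for 0 ≤ s < t ≤ d − 1. -/
open MvPolynomial
open Fin.NatCast

/-!
Shrinking the row gap of a Hankel minor one step at a time splits off one adjacent minor per
step, so every Hankel minor is a telescoping sum of adjacent ones.
-/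

section HankelMinor

variable {R : Type*} [CommRing R] (z : ℕ → R)

/-- The minor of the Hankel matrix `(z (a + b))` on rows `a, a + k` and columns `b, b'`,
where `s = a + b` and `t = a + b'`. -/
def hankelMinor (s t k : ℕ) : R := z s * z (t + k) - z t * z (s + k)

theorem hankelMinor_zero (s t : ℕ) : hankelMinor z s t 0 = 0 := by
  simp only [hankelMinor, add_zero]
  ring

theorem hankelMinor_self (s k : ℕ) : hankelMinor z s s k = 0 := by
  simp only [hankelMinor]
  ring

theorem hankelMinor_succ (s t k : ℕ) :
    hankelMinor z s t (k + 1) = hankelMinor z s (t + k) 1 + hankelMinor z (s + 1) t k := by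
  simp only [hankelMinor, add_assoc, add_comm 1 k]
  ring

theorem hankelMinor_mem_of_adjacent {I : Ideal R} {n : ℕ}
    (hI : ∀ s t, s < t → t + 1 ≤ n → hankelMinor z s t 1 ∈ I) {s t k : ℕ}
    (hst : s ≤ t) (hk : t + k ≤ n) : hankelMinor z s t k ∈ I := by
  induction k generalizing s with
  | zero => simp only [hankelMinor_zero, I.zero_mem]
  | succ k ih =>
    rcases hst.eq_or_lt with rfl | hlt
    · simp only [hankelMinor_self, I.zero_mem]
    · rw [hankelMinor_succ]
      exact I.add_mem (hI s (t + k) (by omega) (by omega)) (ih hlt (by omega))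

end HankelMinor

/-- Every 2×2 minor of the generic Hankel matrix lies in the ideal generated by the
"adjacent" 2×2 minors: in `K[z_0,…,z_d]`, for `0 ≤ i < i'`, `0 ≤ j < j'` with `i' + j' ≤ d`,
the minor `z_{i+j}·z_{i'+j'} − z_{i+j'}·z_{i'+j}` lies in the ideal generated by the
polynomials `z_s·z_{t+1} − z_{s+1}·z_t` for `0 ≤ s < t ≤ d − 1`. -/
theorem stmt18 {K : Type*} [CommRing K] (d : ℕ) (i i' j j' : ℕ)
    (hi : i < i') (hj : j < j') (hij : i' + j' ≤ d) :
    (X ((i + j : ℕ) : Fin (d + 1)) * X ((i' + j' : ℕ) : Fin (d + 1)) -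
        X ((i + j' : ℕ) : Fin (d + 1)) * X ((i' + j : ℕ) : Fin (d + 1)) :
      MvPolynomial (Fin (d + 1)) K) ∈
    Ideal.span {p : MvPolynomial (Fin (d + 1)) K |
      ∃ s t : ℕ, s < t ∧ t ≤ d - 1 ∧
        p = X ((s : ℕ) : Fin (d + 1)) * X ((t + 1 : ℕ) : Fin (d + 1)) -
            X ((s + 1 : ℕ) : Fin (d + 1)) * X ((t : ℕ) : Fin (d + 1))} := by
  rw [show i' + j' = i + j' + (i' - i) by omega, show i' + j = i + j + (i' - i) by omega]
  refine hankelMinor_mem_of_adjacent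
    (fun m : ℕ => (X (m : Fin (d + 1)) : MvPolynomial (Fin (d + 1)) K))
    (s := i + j) (t := i + j') (k := i' - i) (n := d) ?_ (by omega) (by omega)
  exact fun s t hst _ => Ideal.subset_span ⟨s, t, hst, by omega, by simp only [hankelMinor]; ring⟩
end
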